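/- arXiv:1304.7287 — 3 statements merged into one kernel-verified Lean document; each statement's English description precedes it below -/
import Mathlib

section
/- Let b : ℕ → {0,1} be a non-degenerate binary sequence. Then for every positive integer x, U⁻_b(U⁺_b(x)) < x, where U⁺_b(x) is the number of 1's before the x-th 0 in b and U⁻_b(x) is the number of 0's before the x-th 1 in b. -/
open Filter Set

/-- The number of `true`s (1's) appearing strictly before the `x`-th `false` (0)
in the binary sequence `b`; `Uplus b 0 = 0`. -/
noncomputable def Uplus (b : ℕ → Bool) (x : ℕ) : ℕ :=
  if x = 0 then 0
  else sInf {j : ℕ | ((Finset.range j).filter (fun i => b i = false)).card = x} - x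

/-- The number of `false`s (0's) appearing strictly before the `x`-th `true` (1). -/
noncomputable def Uminus (b : ℕ → Bool) (x : ℕ) : ℕ :=
  Uplus (fun i => !(b i)) x

/-- A binary sequence is non-degenerate if it has infinitely many 0's and
infinitely many 1's. -/
def NonDeg (b : ℕ → Bool) : Prop :=
  {i | b i = false}.Infinite ∧ {i | b i = true}.Infinite

/-- An arrow environment is non-degenerate if every column is non-degenerate. -/
def NonDegEnv (a : ℤ → ℕ → Bool) : Prop := ∀ x : ℤ, NonDeg (a x)

/-- The history (most recent position first) of the walk driven by the arrow
environment `a`, started at `0`: at its `k`-th visit (`k` counted from `0`)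
to site `x` the walk moves right if `a x k = true` and left otherwise. -/
def walkHist (a : ℤ → ℕ → Bool) : ℕ → List ℤ
  | 0 => [0]
  | t + 1 =>
    let h := walkHist a t
    let x := h.headI
    let k := h.countP (fun y => decide (y = x)) - 1
    (x + (if a x k then 1 else -1)) :: h

/-- The position at time `t` of the walk driven by `a`, started at `0`. -/
def walk (a : ℤ → ℕ → Bool) (t : ℕ) : ℤ := (walkHist a t).headI

/-- `Zplus a n y`: the forward process `Z⁺` with initial value `y`. -/
noncomputable def Zplus (a : ℤ → ℕ → Bool) : ℕ → ℕ → ℕ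
  | 0, y => y
  | n + 1, y => Uplus (a (n : ℤ)) (Zplus a n y)

/-- `Zminus a n y`: the backward process `Z⁻` with initial value `y`. -/
noncomputable def Zminus (a : ℤ → ℕ → Bool) : ℕ → ℕ → ℕ
  | 0, y => y
  | n + 1, y => Uminus (a (-(n : ℤ))) (Zminus a n y)

/-- `ZminusBack a l y = U⁻_{a 0} ∘ ⋯ ∘ U⁻_{a (l-1)} (y)`. -/
noncomputable def ZminusBack (a : ℤ → ℕ → Bool) (l y : ℕ) : ℕ :=
  (List.range l).foldr (fun i z => Uminus (a (i : ℤ)) z) y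

/-!
Let `N` be the position of the `x`-th `0` of `b`. Then `U⁺_b(x)` is the number of `1`'s in
`[0, N)`, so the `U⁺_b(x)`-th `1` (if any) sits before `N` and `U⁻_b(U⁺_b(x))` counts only `0`'s
in `[0, N)`, of which there are `x - 1`.
-/

lemma Nat.sInf_setOf_count_eq {p : ℕ → Prop} [DecidablePred p] (hp : (Set.ofPred p).Infinite)
    {x : ℕ} (hx : 1 ≤ x) :
    sInf {j | Nat.count p j = x} = Nat.nth p (x - 1) + 1 := by
  have hmem : Nat.count p (Nat.nth p (x - 1) + 1) = x := by
    rw [Nat.count_nth_succ_of_infinite hp]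
    omega
  refine le_antisymm (Nat.sInf_le hmem) (Nat.succ_le_of_lt ?_)
  rw [← Nat.lt_nth_iff_count_lt hp, Nat.sInf_mem (s := {j | Nat.count p j = x}) ⟨_, hmem⟩]
  omega

lemma count_true_add_count_false (b : ℕ → Bool) (n : ℕ) :
    Nat.count (b · = true) n + Nat.count (b · = false) n = n := by
  induction n with
  | zero => simp
  | succ n ih =>
    rw [Nat.count_succ, Nat.count_succ]
    cases b n <;> simp only [Bool.true_eq_false, Bool.false_eq_true, if_true, if_false] <;> omega

lemma Uplus_eq_count_nth {b : ℕ → Bool} (hb : {i | b i = false}.Infinite) {x : ℕ} (hx : 1 ≤ x) :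
    Uplus b x = Nat.count (b · = true) (Nat.nth (b · = false) (x - 1)) := by
  have hcount : Nat.count (b · = false) (Nat.nth (b · = false) (x - 1)) = x - 1 :=
    Nat.count_nth_of_infinite hb _
  have hset : {j | ((Finset.range j).filter (b · = false)).card = x}
      = {j | Nat.count (b · = false) j = x} := by
    simp only [Nat.count_eq_card_filter_range]
  rw [Uplus, if_neg (by omega), hset, Nat.sInf_setOf_count_eq hb hx]
  have := count_true_add_count_false b (Nat.nth (b · = false) (x - 1))
  omega

lemma Uplus_le_count_true {b : ℕ → Bool} (hb : {i | b i = false}.Infinite) {x n : ℕ}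
    (hxn : x ≤ Nat.count (b · = false) n) :
    Uplus b x ≤ Nat.count (b · = true) n := by
  rcases Nat.eq_zero_or_pos x with rfl | hx
  · simp [Uplus]
  rw [Uplus_eq_count_nth hb hx]
  exact Nat.count_monotone _ (Nat.nth_lt_of_lt_count (by omega)).le

lemma Uminus_le_count_false {b : ℕ → Bool} (hb : {i | b i = true}.Infinite) {y n : ℕ}
    (hyn : y ≤ Nat.count (b · = true) n) :
    Uminus b y ≤ Nat.count (b · = false) n := by
  have hnot : {i | (!b i) = false}.Infinite := by simpa using hb
  simpa [Uminus] using Uplus_le_count_true (b := (!b ·)) hnot (n := n) (by simpa using hyn)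

/-- `U⁻_b ∘ U⁺_b (x) < x` for every positive `x`. -/
theorem stmt_2 (b : ℕ → Bool) (hb : NonDeg b) (x : ℕ) (hx : 1 ≤ x) :
    Uminus b (Uplus b x) < x := by
  obtain ⟨hzeros, hones⟩ := hb
  have hUplus := Uplus_eq_count_nth hzeros hx
  have hUminus := Uminus_le_count_false hones hUplus.le
  rw [Nat.count_nth_of_infinite hzeros] at hUminus
  omega
end

section
/- Let a be a non-degenerate arrow environment on ℤ and let X be the deterministic walk on ℤ started at 0 which at each visit to a site x moves right if the next unused arrow at x is 1 and left if it is 0 (the walk at its k-th visit to x uses arrow a(x,k)). Let T₋₁ be the first hitting time of −1, and for n ≥ 1 let W_n be the total number of crossings of the edge {n−1,n} from n−1 to n before time T₋₁ (with W₀ = 1). Define Z⁺_0 = 1 and Z⁺_n = U⁺_{a(n−1,·)}(Z⁺_{n−1}) for n ≥ 1, where U⁺_b(x) is the number of 1's before the x-th 0 of b. If T₋₁ < ∞, then Z⁺_n = W_n for all n ≥ 0. -/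
/-! Let `D n` be the number of steps from `n` to `n - 1` before `T₋₁`. As the walk starts at `0`
and stops at `-1`, it crosses each edge `{n, n + 1}` with `n ≥ 0` equally often in both
directions, and `D 0 = 1`. Up to time `T₋₁` the walk has used an initial segment of the column
`a n`, whose `0`s are its left steps and whose `1`s its right steps from `n`; since it leaves
`n` for the last time to the left, that segment ends with a `0`, so the number of right steps
from `n`, which is `D (n + 1)`, equals `U⁺_{a n}(D n)`. Hence `D n = Z⁺_n`, and `W_n = D n` by
the crossing balance. -/

open Filter Set

namespace Nat

theorem count_and_count (p q : ℕ → Prop) [DecidablePred p] [DecidablePred q] (m : ℕ) :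
    count (fun t => p t ∧ q (count p t)) m = count q (count p m) := by
  induction m with
  | zero => simp
  | succ m ih =>
    by_cases hm : p m <;> simp [count_succ, hm, ih]

theorem count_false_add_count_true (b : ℕ → Bool) (n : ℕ) :
    count (fun i => b i = false) n + count (fun i => b i = true) n = n := by
  induction n with
  | zero => simp
  | succ n ih => cases hb : b n <;> simp [count_succ, hb] <;> omega

end Nat

theorem Uplus_count_false {b : ℕ → Bool} {V : ℕ} (hb : b V = false) :
    Uplus b (Nat.count (fun i => b i = false) (V + 1)) =
      Nat.count (fun i => b i = true) (V + 1) := by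
  set W := Nat.count (fun i => b i = false) (V + 1)
  have hW : W = Nat.count (fun i => b i = false) V + 1 := by simp [W, Nat.count_succ, hb]
  -- as `b V = false`, `V + 1` is the least `j` with `W` falses in `range j`
  have hinf : sInf {j | ((Finset.range j).filter (fun i => b i = false)).card = W} = V + 1 := by
    simp only [← Nat.count_eq_card_filter_range]
    refine le_antisymm (Nat.sInf_le rfl) (le_of_not_gt fun hlt => ?_)
    have hmem := Nat.sInf_mem (s := {j | Nat.count (fun i => b i = false) j = W}) ⟨V + 1, rfl⟩
    have := Nat.count_monotone (fun i => b i = false) (Nat.le_of_lt_succ hlt)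
    simp only [Set.mem_ofPred_eq] at hmem
    omega
  have := Nat.count_false_add_count_true b (V + 1)
  rw [Uplus, if_neg (by omega), hinf]
  omega

section Walk

variable (a : ℤ → ℕ → Bool)

def localTime (x : ℤ) (t : ℕ) : ℕ := Nat.count (fun s => walk a s = x) t

def crossings (x y : ℤ) (T : ℕ) : ℕ :=
  Nat.count (fun t => walk a t = x ∧ walk a (t + 1) = y) T

theorem walk_zero : walk a 0 = 0 := rfl

theorem walkHist_succ (t : ℕ) : walkHist a (t + 1) = walk a (t + 1) :: walkHist a t := rfl

theorem countP_walkHist (x : ℤ) (t : ℕ) :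
    (walkHist a t).countP (fun y => decide (y = x)) = localTime a x (t + 1) := by
  induction t with
  | zero =>
    by_cases hx : (0 : ℤ) = x <;> simp [walkHist, localTime, Nat.count_succ, walk_zero, hx]
  | succ t ih =>
    rw [walkHist_succ, List.countP_cons, ih, localTime, localTime, Nat.count_succ _ (t + 1)]
    simp

theorem walk_succ (t : ℕ) :
    walk a (t + 1) =
      walk a t + if a (walk a t) (localTime a (walk a t) t) then 1 else -1 := by
  have hk : (walkHist a t).countP (fun y => decide (y = walk a t)) - 1 =
      localTime a (walk a t) t := by
    rw [countP_walkHist, localTime, Nat.count_succ]; simp [localTime]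
  show walk a t + (if a (walk a t) ((walkHist a t).countP (fun y => decide (y = walk a t)) - 1)
      then 1 else -1) = _
  rw [hk]

variable {a}

theorem walk_succ_eq_add_one_iff {t : ℕ} {x : ℤ} (hx : walk a t = x) :
    walk a (t + 1) = x + 1 ↔ a x (localTime a x t) = true := by
  rw [walk_succ, hx]; cases a x (localTime a x t) <;> simp

theorem walk_succ_eq_sub_one_iff {t : ℕ} {x : ℤ} (hx : walk a t = x) :
    walk a (t + 1) = x - 1 ↔ a x (localTime a x t) = false := by
  rw [walk_succ, hx]; cases a x (localTime a x t) <;> simp <;> omega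

theorem walk_succ_eq_add_one_or_sub_one (t : ℕ) :
    walk a (t + 1) = walk a t + 1 ∨ walk a (t + 1) = walk a t - 1 := by
  rw [walk_succ]; split <;> simp [sub_eq_add_neg]

theorem crossings_right_eq_count (x : ℤ) (T : ℕ) :
    crossings a x (x + 1) T = Nat.count (fun k => a x k = true) (localTime a x T) := by
  rw [localTime, ← Nat.count_and_count, crossings]
  congr 1
  ext t
  exact and_congr_right walk_succ_eq_add_one_iff

theorem crossings_left_eq_count (x : ℤ) (T : ℕ) :
    crossings a x (x - 1) T = Nat.count (fun k => a x k = false) (localTime a x T) := by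
  rw [localTime, ← Nat.count_and_count, crossings]
  congr 1
  ext t
  exact and_congr_right walk_succ_eq_sub_one_iff

/-- Each crossing of the edge `{x, x + 1}` switches the walk between the two sides of it. -/
theorem crossings_sub_crossings (x : ℤ) (T : ℕ) :
    (crossings a x (x + 1) T : ℤ) - crossings a (x + 1) x T =
      (if x + 1 ≤ walk a T then 1 else 0) - if x + 1 ≤ walk a 0 then 1 else 0 := by
  induction T with
  | zero => simp [crossings]
  | succ T ih =>
    simp only [crossings, Nat.count_succ] at ih ⊢
    rcases walk_succ_eq_add_one_or_sub_one (a := a) T with h | h <;> push_cast <;>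
      split_ifs <;> omega

theorem crossings_right_eq_crossings_left {x : ℤ} {T : ℕ} (h0 : walk a 0 ≤ x)
    (hT : walk a T ≤ x) : crossings a x (x + 1) T = crossings a (x + 1) x T := by
  have := crossings_sub_crossings (a := a) x T
  rw [if_neg (by omega), if_neg (by omega)] at this
  omega

/-- Between two visits to `x` the walk stays on the side of `x` chosen by the last arrow used
there. -/
theorem walk_lt_iff_last_arrow_eq_false {x : ℤ} {T : ℕ} (hvis : 0 < localTime a x T)
    (hT : walk a T ≠ x) : walk a T < x ↔ a x (localTime a x T - 1) = false := by
  induction T with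
  | zero => simp [localTime] at hvis
  | succ T ih =>
    by_cases hx : walk a T = x
    · have hcount : localTime a x (T + 1) - 1 = localTime a x T := by
        simp [localTime, Nat.count_succ, hx]
      rw [hcount]
      rcases walk_succ_eq_add_one_or_sub_one (a := a) T with h | h
      · simp [(walk_succ_eq_add_one_iff hx).1 (by omega)]; omega
      · simp [(walk_succ_eq_sub_one_iff hx).1 (by omega)]; omega
    · have hcount : localTime a x (T + 1) = localTime a x T := by
        simp [localTime, Nat.count_succ, hx]
      rw [hcount] at hvis ⊢
      rw [← ih hvis hx]
      rcases walk_succ_eq_add_one_or_sub_one (a := a) T with h | h <;> omega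

/-- The walk leaves `x` for the last time to the left, so it has used all arrows at `x` up to
and including a `false`. -/
theorem Uplus_crossings_left {x : ℤ} {T : ℕ} (hT : walk a T < x) :
    Uplus (a x) (crossings a x (x - 1) T) = crossings a x (x + 1) T := by
  rw [crossings_left_eq_count, crossings_right_eq_count]
  rcases hV : localTime a x T with _ | V
  · simp [Uplus]
  · have hlast := (walk_lt_iff_last_arrow_eq_false (by omega) hT.ne).1 hT
    rw [hV, Nat.add_sub_cancel] at hlast
    exact Uplus_count_false hlast

section HittingTime

variable {T : ℕ} (hT : walk a T = -1) (hmin : ∀ t < T, walk a t ≠ -1)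
include hmin

theorem walk_nonneg_of_lt_hitting : ∀ t < T, 0 ≤ walk a t := by
  intro t
  induction t with
  | zero => intro _; exact (walk_zero a).ge
  | succ t ih =>
    intro ht
    have := hmin (t + 1) ht
    rcases walk_succ_eq_add_one_or_sub_one (a := a) t with h | h <;> have := ih (by omega) <;> omega

include hT

theorem crossings_zero_neg_one_of_hitting : crossings a 0 (-1) T = 1 := by
  obtain ⟨S, rfl⟩ : ∃ S, T = S + 1 := Nat.exists_eq_add_one.2 (Nat.pos_of_ne_zero fun h =>
    by subst h; simp [walk_zero] at hT)
  have hS : walk a S = 0 := by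
    have := walk_nonneg_of_lt_hitting hmin S (by omega)
    rcases walk_succ_eq_add_one_or_sub_one (a := a) S with h | h <;> omega
  have hbefore : Nat.count (fun t => walk a t = 0 ∧ walk a (t + 1) = -1) S = 0 :=
    Nat.count_iff_forall_not.2 fun t ht h => hmin (t + 1) (by omega) h.2
  simp [crossings, Nat.count_succ, hbefore, hS, hT]

theorem Zplus_one_eq_crossings_left (n : ℕ) : Zplus a n 1 = crossings a n (n - 1) T := by
  induction n with
  | zero => exact (crossings_zero_neg_one_of_hitting hT hmin).symm
  | succ n ih =>
    have hn : (0 : ℤ) ≤ n := n.cast_nonneg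
    rw [Zplus, ih, Uplus_crossings_left (by omega),
      crossings_right_eq_crossings_left (by rw [walk_zero]; omega) (by omega)]
    push_cast
    rw [add_sub_cancel_right]

end HittingTime

end Walk

theorem stmt_4_general (a : ℤ → ℕ → Bool) (h : ∃ t, walk a t = -1) :
    ∀ n : ℕ, Zplus a n 1 =
      if n = 0 then 1
      else ((Finset.range (Nat.find h)).filter
        (fun t => walk a t = (n : ℤ) - 1 ∧ walk a (t + 1) = (n : ℤ))).card := by
  have hT : walk a (Nat.find h) = -1 := Nat.find_spec h
  have hmin : ∀ t < Nat.find h, walk a t ≠ -1 := fun t ht => Nat.find_min h ht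
  rintro (_ | n)
  · rfl
  · have hn : (0 : ℤ) ≤ n := n.cast_nonneg
    rw [if_neg n.succ_ne_zero, ← Nat.count_eq_card_filter_range,
      Zplus_one_eq_crossings_left hT hmin]
    push_cast
    rw [add_sub_cancel_right, ← crossings_right_eq_crossings_left (by rw [walk_zero]; omega)
      (by omega)]
    rfl

/-- if `T₋₁ < ∞` then `Z⁺_n = W_n` for all `n ≥ 0`, where `W_n` is the
number of right crossings of the edge `{n-1,n}` before time `T₋₁` (and `W₀ = 1`). -/
theorem stmt_4 (a : ℤ → ℕ → Bool) (hnd : NonDegEnv a) (h : ∃ t, walk a t = -1) :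
    ∀ n : ℕ, Zplus a n 1 =
      if n = 0 then 1
      else ((Finset.range (Nat.find h)).filter
        (fun t => walk a t = (n : ℤ) - 1 ∧ walk a (t + 1) = (n : ℤ))).card :=
  stmt_4_general a h
end

section
/- Let a be a non-degenerate arrow environment, X the walk on ℤ driven by a started at 0, and T₋₁ its hitting time of −1. Define the process Z⁺ by Z⁺_0 = 1 and Z⁺_n = U⁺_{a(n−1,·)}(Z⁺_{n−1}). Then T₋₁ < ∞ if and only if there exists n with Z⁺_n = 0. -/
/-!
Write `U_x(t)` and `D_x(t)` for the number of steps `x → x + 1` and `x → x - 1` taken before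
time `t`. They are the numbers of ones and of zeros among the arrows of column `a x` used so far,
so `U⁺_{a x}(D_x(t)) ≤ U_x(t)`, and `U_x(t) ≤ U⁺_{a x}(y)` as soon as `D_x(t) < y` (the column
having infinitely many zeros). Counting crossings of the edge `{x - 1, x}` gives
`U_{x-1}(t) = D_x(t) + [x ≤ X_t]` for `x ≥ 1`.

If `T = T₋₁ < ∞`, then `D_0(T) = 1` and `D_{n+1}(T) = U_n(T) ≥ U⁺(D_n(T))`, so monotonicity of
`U⁺` gives `Z⁺_n ≤ D_n(T)`, which vanishes for `n > T`. If the walk never reaches `-1`, induction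
on `n` gives `D_n(t) < Z⁺_n` for all `t` together with `X_t > n` eventually: the bound on `D_n`
leaves only finitely many visits to `n`, and at a time when the walk is above `n`,
`D_{n+1} = U_n - 1 < U⁺(Z⁺_n) = Z⁺_{n+1}`.
-/

open Filter Set

namespace ArrowWalk

section Counting

variable (b : ℕ → Bool)

lemma count_true_add_count_false (m : ℕ) :
    Nat.count (b · = true) m + Nat.count (b · = false) m = m := by
  induction m with
  | zero => simp
  | succ m ih => cases h : b m <;> simp [Nat.count_succ, h] <;> omega

lemma Uplus_eq_count_true {x m : ℕ} (hm : Nat.count (b · = false) m = x) :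
    Uplus b x = Nat.count (b · = true) (sInf {j | Nat.count (b · = false) j = x}) := by
  have hS : _ = x := Nat.sInf_mem (show {j | Nat.count (b · = false) j = x}.Nonempty from ⟨m, hm⟩)
  have hsum := count_true_add_count_false b (sInf {j | Nat.count (b · = false) j = x})
  simp only [Uplus, ← Nat.count_eq_card_filter_range]
  split_ifs with hx
  · subst hx
    have h0 : sInf {j | Nat.count (b · = false) j = 0} = 0 :=
      Nat.sInf_eq_zero.2 (Or.inl (Nat.count_zero _))
    rw [h0, Nat.count_zero]
  · omega

lemma Uplus_le_count_true {x m : ℕ} (hm : Nat.count (b · = false) m = x) :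
    Uplus b x ≤ Nat.count (b · = true) m := by
  rw [Uplus_eq_count_true b hm]
  exact Nat.count_monotone _ (Nat.sInf_le hm)

variable {b}

lemma count_true_le_Uplus (hb : {i | b i = false}.Infinite) {x m : ℕ}
    (hm : Nat.count (b · = false) m < x) : Nat.count (b · = true) m ≤ Uplus b x := by
  have hx := Nat.count_nth_of_infinite hb x
  have hS : _ = x := Nat.sInf_mem (show {j | Nat.count (b · = false) j = x}.Nonempty from ⟨_, hx⟩)
  rw [Uplus_eq_count_true b hx]
  exact Nat.count_monotone _ (Nat.lt_of_count_lt_count (hm.trans_eq hS.symm)).le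

lemma Uplus_mono (hb : {i | b i = false}.Infinite) : Monotone (Uplus b) := by
  intro x y hxy
  obtain rfl | hlt := hxy.eq_or_lt
  · rfl
  · have hx := Nat.count_nth_of_infinite hb x
    exact (Uplus_le_count_true b hx).trans (count_true_le_Uplus hb (hx.trans_lt hlt))

end Counting

section Walk

variable (a : ℤ → ℕ → Bool)

def visits (x : ℤ) : ℕ → ℕ := Nat.count (fun s => walk a s = x)

def upCrossings (x : ℤ) : ℕ → ℕ := Nat.count (fun s => walk a s = x ∧ walk a (s + 1) = x + 1)

def downCrossings (x : ℤ) : ℕ → ℕ := Nat.count (fun s => walk a s = x ∧ walk a (s + 1) = x - 1)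

lemma walk_zero : walk a 0 = 0 := rfl

lemma walkHist_succ (t : ℕ) : walkHist a (t + 1) = walk a (t + 1) :: walkHist a t := rfl

lemma countP_walkHist (t : ℕ) (x : ℤ) :
    (walkHist a t).countP (fun y => decide (y = x)) = visits a x (t + 1) := by
  induction t with
  | zero => by_cases h : (0 : ℤ) = x <;> simp [walkHist, visits, Nat.count_succ, walk, h]
  | succ t ih =>
    rw [walkHist_succ, List.countP_cons, ih, visits, Nat.count_succ _ (t + 1)]
    simp

lemma walk_succ (t : ℕ) :
    walk a (t + 1) = walk a t + if a (walk a t) (visits a (walk a t) t) then 1 else -1 := by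
  show walk a t + (if a (walk a t) ((walkHist a t).countP (· = walk a t) - 1) then 1 else -1) = _
  rw [countP_walkHist, visits, Nat.count_succ, if_pos rfl, Nat.add_sub_cancel]

lemma walk_succ_eq_add_one_iff (t : ℕ) :
    walk a (t + 1) = walk a t + 1 ↔ a (walk a t) (visits a (walk a t) t) = true := by
  rw [walk_succ]
  split_ifs with h <;> simp [h]

lemma walk_succ_eq_sub_one_iff (t : ℕ) :
    walk a (t + 1) = walk a t - 1 ↔ a (walk a t) (visits a (walk a t) t) = false := by
  rw [walk_succ]
  split_ifs with h <;> simp [h] <;> omega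

lemma walk_succ_eq_add_one_or_sub_one (t : ℕ) :
    walk a (t + 1) = walk a t + 1 ∨ walk a (t + 1) = walk a t - 1 := by
  rw [walk_succ_eq_add_one_iff, walk_succ_eq_sub_one_iff]
  exact Bool.eq_false_or_eq_true _

lemma upCrossings_eq_count (x : ℤ) (t : ℕ) :
    upCrossings a x t = Nat.count (a x · = true) (visits a x t) := by
  induction t with
  | zero => simp [upCrossings, visits]
  | succ t ih =>
    simp only [upCrossings, visits, Nat.count_succ] at ih ⊢
    by_cases hx : walk a t = x
    · subst hx
      simp [ih, walk_succ_eq_add_one_iff, visits, Nat.count_succ]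
    · simp [hx, ih]

lemma downCrossings_eq_count (x : ℤ) (t : ℕ) :
    downCrossings a x t = Nat.count (a x · = false) (visits a x t) := by
  induction t with
  | zero => simp [downCrossings, visits]
  | succ t ih =>
    simp only [downCrossings, visits, Nat.count_succ] at ih ⊢
    by_cases hx : walk a t = x
    · subst hx
      simp [ih, walk_succ_eq_sub_one_iff, visits, Nat.count_succ]
    · simp [hx, ih]

lemma crossing_balance (x : ℤ) (t : ℕ) :
    upCrossings a (x - 1) t + (if x ≤ 0 then 1 else 0)
      = downCrossings a x t + if x ≤ walk a t then 1 else 0 := by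
  induction t with
  | zero => rw [upCrossings, downCrossings, Nat.count_zero, Nat.count_zero, walk_zero]
  | succ t ih =>
    simp only [upCrossings, downCrossings, Nat.count_succ] at ih ⊢
    rcases walk_succ_eq_add_one_or_sub_one a t with h | h <;> split_ifs at * <;> omega

lemma walk_le (t : ℕ) : walk a t ≤ t := by
  induction t with
  | zero => simp [walk_zero]
  | succ t ih => rcases walk_succ_eq_add_one_or_sub_one a t with h | h <;> push_cast <;> omega

lemma walk_nonneg (hne : ∀ t, walk a t ≠ -1) (t : ℕ) : 0 ≤ walk a t := by
  induction t with
  | zero => simp [walk_zero]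
  | succ t ih =>
    have := hne (t + 1)
    rcases walk_succ_eq_add_one_or_sub_one a t with h | h <;> omega

end Walk

section Recurrence

variable {a : ℤ → ℕ → Bool}

lemma Zplus_le_downCrossings (hzeros : ∀ x : ℤ, {i | a x i = false}.Infinite) {T : ℕ}
    (hT : walk a T = -1) (hbefore : ∀ s < T, walk a s ≠ -1) (n : ℕ) :
    Zplus a n 1 ≤ downCrossings a n T := by
  induction n with
  | zero =>
    have hup : upCrossings a (-1) T = 0 :=
      Nat.count_iff_forall_not.2 fun s hs h => hbefore s hs h.1
    have hbalance := crossing_balance a 0 T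
    rw [zero_sub, hup, hT, if_pos le_rfl, if_neg (by omega)] at hbalance
    show 1 ≤ downCrossings a 0 T
    omega
  | succ n ih =>
    have hbalance := crossing_balance a ((n : ℤ) + 1) T
    rw [add_sub_cancel_right, hT, if_neg (by omega), if_neg (by omega)] at hbalance
    calc Zplus a (n + 1) 1 = Uplus (a n) (Zplus a n 1) := rfl
      _ ≤ Uplus (a n) (downCrossings a n T) := Uplus_mono (hzeros n) ih
      _ ≤ Nat.count (a n · = true) (visits a n T) :=
        Uplus_le_count_true _ (downCrossings_eq_count a n T).symm
      _ = downCrossings a (n + 1 : ℕ) T := by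
        rw [← upCrossings_eq_count]; push_cast; omega

lemma exists_Zplus_eq_zero_of_exists_walk_eq_neg_one
    (hzeros : ∀ x : ℤ, {i | a x i = false}.Infinite) (h : ∃ t, walk a t = -1) :
    ∃ n, Zplus a n 1 = 0 := by
  classical
  refine ⟨Nat.find h + 1, Nat.eq_zero_of_le_zero ?_⟩
  calc Zplus a (Nat.find h + 1) 1
      ≤ downCrossings a (Nat.find h + 1 : ℕ) (Nat.find h) :=
        Zplus_le_downCrossings hzeros (Nat.find_spec h) (fun s hs => Nat.find_min h hs) _
    _ = 0 := Nat.count_iff_forall_not.2 fun s hs h => by have := walk_le a s; omega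

lemma eventually_walk_ne_of_downCrossings_lt {x : ℤ} (hzeros : {i | a x i = false}.Infinite)
    {K : ℕ} (hK : ∀ t, downCrossings a x t < K) : ∀ᶠ t in atTop, walk a t ≠ x := by
  set m := Nat.nth (a x · = false) K
  have hvisits : ∀ t, visits a x t < m := fun t =>
    Nat.lt_of_count_lt_count <| by
      rw [Nat.count_nth_of_infinite hzeros, ← downCrossings_eq_count]
      exact hK t
  refine Filter.not_frequently.1 fun hfreq => ?_
  have hinf := Nat.frequently_atTop_iff_infinite.1 hfreq
  have := hvisits (Nat.nth (fun t => walk a t = x) m)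
  rw [visits, Nat.count_nth_of_infinite hinf] at this
  exact lt_irrefl _ this

lemma downCrossings_lt_Zplus_and_eventually_lt_walk
    (hzeros : ∀ x : ℤ, {i | a x i = false}.Infinite) (hne : ∀ t, walk a t ≠ -1) (n : ℕ) :
    (∀ t, downCrossings a n t < Zplus a n 1) ∧ ∀ᶠ t in atTop, (n : ℤ) < walk a t := by
  induction n with
  | zero =>
    have hdown : ∀ t, downCrossings a (0 : ℕ) t < Zplus a 0 1 := fun t => by
      have : downCrossings a 0 t = 0 :=
        Nat.count_iff_forall_not.2 fun s _ h => hne (s + 1) (by simpa using h.2)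
      simp [this, Zplus]
    refine ⟨hdown, ?_⟩
    filter_upwards [eventually_walk_ne_of_downCrossings_lt (hzeros _) hdown] with t ht
    have := walk_nonneg a hne t
    push_cast at ht ⊢
    omega
  | succ n ih =>
    obtain ⟨hdown, hlt⟩ := ih
    have hup : ∀ t, upCrossings a n t ≤ Zplus a (n + 1) 1 := fun t => by
      rw [upCrossings_eq_count]
      exact count_true_le_Uplus (hzeros n) (by rw [← downCrossings_eq_count]; exact hdown t)
    have hdown' : ∀ t, downCrossings a (n + 1 : ℕ) t < Zplus a (n + 1) 1 := by
      intro t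
      obtain ⟨t', hwalk, ht'⟩ := (hlt.and (eventually_ge_atTop t)).exists
      have hbalance := crossing_balance a ((n : ℤ) + 1) t'
      rw [add_sub_cancel_right, if_neg (by omega), if_pos (by omega)] at hbalance
      have hmono : downCrossings a ((n : ℤ) + 1) t ≤ downCrossings a ((n : ℤ) + 1) t' :=
        Nat.count_monotone _ ht'
      have := hup t'
      push_cast
      omega
    refine ⟨hdown', ?_⟩
    filter_upwards [hlt, eventually_walk_ne_of_downCrossings_lt (hzeros _) hdown'] with t h1 h2
    push_cast at h2 ⊢
    omega

end Recurrence

end ArrowWalk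

/-- `T₋₁ < ∞` if and only if `Z⁺_n = 0` for some `n`. -/
theorem stmt_6 (a : ℤ → ℕ → Bool) (hnd : NonDegEnv a) :
    (∃ t, walk a t = -1) ↔ ∃ n : ℕ, Zplus a n 1 = 0 := by
  have hzeros : ∀ x : ℤ, {i | a x i = false}.Infinite := fun x => (hnd x).1
  refine ⟨ArrowWalk.exists_Zplus_eq_zero_of_exists_walk_eq_neg_one hzeros,
    fun ⟨n, hn⟩ => by_contra fun hne => ?_⟩
  have := (ArrowWalk.downCrossings_lt_Zplus_and_eventually_lt_walk hzeros
    (fun t ht => hne ⟨t, ht⟩) n).1 0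
  omega
end
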